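/- arXiv:1802.00211 — 9 statements merged into one kernel-verified Lean document; each statement's English description precedes it below -/
import Mathlib

section
/- For any real numbers a < b, any λ ∈ [0,1), any μ ∈ (0,1), and any t ∈ ℝ, the number θ̃(t) = exp(t·((1-μ)a + μb) + (t²/2)·((1+λ)/(1-λ))·((b-a)²/4)) satisfies θ̃(t)² ≥ λ·e^{t(a+b)}. -/
theorem stmt_0 (a b lam mu t : ℝ) (hab : a < b) (hlam : lam ∈ Set.Ico (0:ℝ) 1)
    (hmu : mu ∈ Set.Ioo (0:ℝ) 1) :
    (Real.exp (t * ((1 - mu) * a + mu * b) +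
      t ^ 2 / 2 * ((1 + lam) / (1 - lam)) * ((b - a) ^ 2 / 4))) ^ 2 ≥
    lam * Real.exp (t * (a + b)) := by
  obtain ⟨hl0, hl1⟩ := hlam
  obtain ⟨hm0, hm1⟩ := hmu
  rcases eq_or_lt_of_le hl0 with h0 | h0
  · rw [← h0, zero_mul]
    positivity
  · have h1l : (0:ℝ) < 1 - lam := by linarith
    have hlog : Real.log lam ≤ lam - 1 := Real.log_le_sub_one_of_pos h0
    set al := (1 + lam) / (1 - lam) with hal
    have halpos : 0 < al := by positivity
    have hmul : al * (1 - lam) = 1 + lam := div_mul_cancel₀ _ h1l.ne'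
    have hkey : Real.log lam + t * (a + b) ≤
        2 * (t * ((1 - mu) * a + mu * b) + t ^ 2 / 2 * al * ((b - a) ^ 2 / 4)) := by
      have hloga : al * Real.log lam ≤ al * (lam - 1) :=
        mul_le_mul_of_nonneg_left hlog halpos.le
      nlinarith [mul_nonneg hm0.le (sq_nonneg (al * (t * (b - a)) / 2 + 1)),
        mul_nonneg (sub_pos.mpr hm1).le (sq_nonneg (al * (t * (b - a)) / 2 - 1)),
        mul_pos halpos h1l, sq_nonneg (t * (b - a))]
    calc lam * Real.exp (t * (a + b)) = Real.exp (Real.log lam + t * (a + b)) := by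
          rw [Real.exp_add, Real.exp_log h0]
      _ ≤ Real.exp (2 * (t * ((1 - mu) * a + mu * b) +
          t ^ 2 / 2 * al * ((b - a) ^ 2 / 4))) := Real.exp_le_exp.mpr hkey
      _ = _ := by rw [← Real.exp_nat_mul]; norm_num
end

section
/- Let a < b be reals, λ ∈ [0,1), μ ∈ (0,1), p = (λ + (1-λ)μ)/(1+λ), α(λ) = (1+λ)/(1-λ), and θ̃(t) = exp(t·((1-μ)a + μb) + (t²/2)·α(λ)·(b-a)²/4). Then for every t ∈ ℝ, (θ̃(t) + λ e^{t(a+b)} θ̃(t)^{-1})/(1+λ) ≥ exp(t·((1-p)a + pb) + (b-a)²t²/8). -/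
theorem stmt_2 (a b lam mu p t : ℝ) (hab : a < b) (hlam : lam ∈ Set.Ico (0:ℝ) 1)
    (hmu : mu ∈ Set.Ioo (0:ℝ) 1) (hp : p = (lam + (1 - lam) * mu) / (1 + lam)) :
    (Real.exp (t * ((1 - mu) * a + mu * b) +
        t ^ 2 / 2 * ((1 + lam) / (1 - lam)) * ((b - a) ^ 2 / 4)) +
      lam * Real.exp (t * (a + b)) *
        (Real.exp (t * ((1 - mu) * a + mu * b) +
          t ^ 2 / 2 * ((1 + lam) / (1 - lam)) * ((b - a) ^ 2 / 4)))⁻¹) / (1 + lam) ≥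
    Real.exp (t * ((1 - p) * a + p * b) + (b - a) ^ 2 * t ^ 2 / 8) := by
  obtain ⟨hl0, hl1⟩ := hlam
  have h1 : (0:ℝ) < 1 + lam := by linarith
  have h1' : (0:ℝ) < 1 - lam := by linarith
  set x := t * ((1 - mu) * a + mu * b) +
      t ^ 2 / 2 * ((1 + lam) / (1 - lam)) * ((b - a) ^ 2 / 4) with hx
  have h2 : lam * Real.exp (t * (a + b)) * (Real.exp x)⁻¹
      = lam * Real.exp (t * (a + b) - x) := by
    rw [Real.exp_sub]; ring
  have harg : t * ((1 - p) * a + p * b) + (b - a) ^ 2 * t ^ 2 / 8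
      = (1 / (1 + lam)) * x + (lam / (1 + lam)) * (t * (a + b) - x) := by
    subst hp
    rw [hx]
    field_simp
    ring
  have hc := convexOn_exp.2 (Set.mem_univ x) (Set.mem_univ (t * (a + b) - x))
    (by positivity : (0:ℝ) ≤ 1 / (1 + lam))
    (by positivity : (0:ℝ) ≤ lam / (1 + lam))
    (by field_simp)
  simp only [smul_eq_mul] at hc
  rw [ge_iff_le, h2, harg]
  calc Real.exp (1 / (1 + lam) * x + lam / (1 + lam) * (t * (a + b) - x))
      ≤ 1 / (1 + lam) * Real.exp x + lam / (1 + lam) * Real.exp (t * (a + b) - x) := hc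
    _ = (Real.exp x + lam * Real.exp (t * (a + b) - x)) / (1 + lam) := by ring
end

section
/- Let a < b be reals, λ ∈ [0,1), μ ∈ (0,1), p = (λ + (1-λ)μ)/(1+λ), α(λ) = (1+λ)/(1-λ), and θ̃(t) = exp(t·((1-μ)a + μb) + (t²/2)·α(λ)·(b-a)²/4). Then for every t ∈ ℝ, θ̃(t)² - (1+λ)[(1-p)e^{ta} + p e^{tb}] θ̃(t) + λ e^{t(a+b)} ≥ 0. -/
/-!
Put `c = e^{t(a+b)/2}`, `v = t(b-a)/2`, `m = 2μ - 1` and `r = m v + α v² / 2` with `α = α(λ)`, so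
that `θ̃ = c e^r`, `e^{ta} = c e^{-v}` and `e^{tb} = c e^v`. The quadratic then equals
`c² e^r (1 - λ) [α (cosh r - cosh v) + sinh r - m sinh v]`, and the bracket is nonnegative for all
`α ≥ 1` and `|m| ≤ 1`: multiplied by `v²` and with `r` held fixed it is affine in `m`, and at the
extreme admissible values of `m` it reduces either to the two-point Hoeffding lemma
`cosh v + m sinh v ≤ exp (m v + v² / 2)` or to the elementary bound `sinh x ≤ x cosh x`.
-/
open Real Set ProbabilityTheory MeasureTheory

lemma Real.sinh_le_mul_cosh {x : ℝ} (hx : 0 ≤ x) : sinh x ≤ x * cosh x := by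
  rcases hx.eq_or_lt with rfl | hx
  · simp
  obtain ⟨c, hc, hslope⟩ := exists_hasDerivAt_eq_slope sinh cosh hx
    continuous_sinh.continuousOn fun y _ => hasDerivAt_sinh y
  rw [sinh_zero, sub_zero, sub_zero, eq_div_iff hx.ne'] at hslope
  rw [← hslope, mul_comm]
  gcongr
  rw [cosh_le_cosh, abs_of_pos hc.1, abs_of_pos hx]
  exact hc.2.le

lemma two_mul_add_mul_cosh_sub_cosh_le {r v : ℝ} (hr : -v ≤ r) :
    2 * (r + v) * (cosh v - cosh r) ≤ v ^ 2 * (sinh r + sinh v) := by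
  set P := (v + r) / 2
  set Q := (v - r) / 2
  have hP : 0 ≤ P := by simp only [P]; linarith
  have hcosh : cosh v - cosh r = 2 * sinh P * sinh Q := by
    rw [show v = P + Q by ring, show r = P - Q by ring, cosh_add, cosh_sub]; ring
  have hsinh : sinh r + sinh v = 2 * sinh P * cosh Q := by
    rw [show v = P + Q by ring, show r = P - Q by ring, sinh_add, sinh_sub]; ring
  -- `4 P sinh Q ≤ 4 P Q cosh Q ≤ (P + Q)² cosh Q`, the first step being trivial when `Q ≤ 0`
  have hQ : 4 * P * sinh Q ≤ (P + Q) ^ 2 * cosh Q := by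
    rcases le_total Q 0 with hQ | hQ
    · nlinarith [sinh_nonpos_iff.mpr hQ, one_le_cosh Q, sq_nonneg (P + Q)]
    · nlinarith [sinh_le_mul_cosh hQ, mul_nonneg hP (cosh_pos Q).le, sq_nonneg (P - Q),
        mul_nonneg (sq_nonneg (P - Q)) (cosh_pos Q).le]
  rw [hcosh, hsinh, show r + v = 2 * P by ring, show v = P + Q by ring]
  nlinarith [mul_le_mul_of_nonneg_left hQ (sinh_nonneg_iff.mpr hP)]

lemma cosh_add_mul_sinh_le_exp {m : ℝ} (hm : m ∈ Icc (-1) 1) (v : ℝ) :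
    cosh v + m * sinh v ≤ exp (m * v + v ^ 2 / 2) := by
  let q : unitInterval := ⟨(1 + m) / 2, by constructor <;> linarith [hm.1, hm.2]⟩
  have hq : (q : ℝ) = (1 + m) / 2 := rfl
  have hmean : ∫ x, x ∂Ber((1 : ℝ), -1, q) = m := by
    rw [integral_bernoulliMeasure, hq]; simp; ring
  have hbdd : ∀ᵐ x ∂Ber((1 : ℝ), -1, q), x ∈ Icc (-1) 1 := by
    rw [ae_iff]
    exact bernoulliMeasure_apply_of_notMem_of_notMem q measurableSet_Icc.compl
      (by norm_num) (by norm_num)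
  have hmgf := (hasSubgaussianMGF_of_mem_Icc aemeasurable_id hbdd).mgf_le v
  rw [mgf, integral_bernoulliMeasure] at hmgf
  norm_num [hmean] at hmgf
  have e₁ : exp (m * v) * exp (v * (1 - m)) = exp v := by rw [← exp_add]; ring_nf
  have e₂ : exp (m * v) * exp (v * (-1 - m)) = exp (-v) := by rw [← exp_add]; ring_nf
  calc cosh v + m * sinh v
      = exp (m * v) * (q * exp (v * (1 - m)) + (1 - q) * exp (v * (-1 - m))) := by
        rw [cosh_eq, sinh_eq, hq]
        linear_combination (-(1 + m) / 2) * e₁ - (1 - (1 + m) / 2) * e₂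
    _ ≤ exp (m * v + v ^ 2 / 2) := by
      rw [exp_add]; gcongr

lemma two_mul_sub_mul_cosh_sub_cosh_add_sq_mul_sinh_sub_nonneg {m r v : ℝ} (hv : 0 < v)
    (hm : m ∈ Icc (-1) 1) (hr : m * v + v ^ 2 / 2 ≤ r) :
    0 ≤ 2 * (r - m * v) * (cosh r - cosh v) + v ^ 2 * (sinh r - m * sinh v) := by
  rcases le_total v r with hvr | hrv
  · have hcosh : cosh v ≤ cosh r := by
      rw [cosh_le_cosh, abs_of_pos hv, abs_of_pos (hv.trans_le hvr)]; exact hvr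
    have hsinh : m * sinh v ≤ sinh r :=
      (mul_le_of_le_one_left (sinh_nonneg_iff.mpr hv.le) hm.2).trans (sinh_le_sinh.mpr hvr)
    have : 0 ≤ r - m * v := by nlinarith [sq_nonneg v]
    positivity
  -- The expression is affine in `m`, so it suffices to check it at the two ends of the
  -- admissible range `-1 ≤ m ≤ m₀`, where `m₀` is the value making `r = m₀ v + v² / 2`.
  set B := 2 * v * (cosh r - cosh v) + v ^ 2 * sinh v
  rcases le_total 0 B with hB | hB
  · set m₀ := (r - v ^ 2 / 2) / v
    have hm₀v : m₀ * v = r - v ^ 2 / 2 := div_mul_cancel₀ _ hv.ne'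
    have hmm₀ : m ≤ m₀ := le_of_mul_le_mul_right (by linarith) hv
    have hm₀ : m₀ ≤ 1 := le_of_mul_le_mul_right (by nlinarith) hv
    have hhoeff := cosh_add_mul_sinh_le_exp ⟨hm.1.trans hmm₀, hm₀⟩ v
    rw [hm₀v, sub_add_cancel, ← cosh_add_sinh] at hhoeff
    have hE : 2 * (r - m * v) * (cosh r - cosh v) + v ^ 2 * (sinh r - m * sinh v) =
        v ^ 2 * (cosh r + sinh r - (cosh v + m₀ * sinh v)) + (m₀ - m) * B := by
      linear_combination (-2 * (cosh r - cosh v)) * hm₀v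
    rw [hE]
    exact add_nonneg (mul_nonneg (sq_nonneg v) (sub_nonneg.mpr hhoeff))
      (mul_nonneg (sub_nonneg.mpr hmm₀) hB)
  · have hend := two_mul_add_mul_cosh_sub_cosh_le (r := r) (v := v) (by nlinarith [hm.1])
    have hE : 2 * (r - m * v) * (cosh r - cosh v) + v ^ 2 * (sinh r - m * sinh v) =
        v ^ 2 * (sinh r + sinh v) - 2 * (r + v) * (cosh v - cosh r) - (m + 1) * B := by
      ring
    have hmB : (m + 1) * B ≤ 0 := mul_nonpos_of_nonneg_of_nonpos (by linarith [hm.1]) hB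
    rw [hE]
    linarith

lemma mul_cosh_sub_cosh_add_sinh_sub_mul_sinh_nonneg {α m : ℝ} (hα : 1 ≤ α)
    (hm : m ∈ Icc (-1) 1) (v : ℝ) :
    0 ≤ α * (cosh (m * v + α * v ^ 2 / 2) - cosh v) +
      (sinh (m * v + α * v ^ 2 / 2) - m * sinh v) := by
  wlog hv : 0 < v generalizing m v
  · rcases (not_lt.mp hv).eq_or_lt with rfl | hv
    · simp
    have := this (m := -m) ⟨by linarith [hm.2], by linarith [hm.1]⟩ (-v) (neg_pos.mpr hv)
    simpa only [neg_mul_neg, even_two.neg_pow, cosh_neg, sinh_neg] using this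
  have hr : m * v + v ^ 2 / 2 ≤ m * v + α * v ^ 2 / 2 := by nlinarith [sq_nonneg v]
  have h := two_mul_sub_mul_cosh_sub_cosh_add_sq_mul_sinh_sub_nonneg hv hm hr
  rw [show m * v + α * v ^ 2 / 2 - m * v = α * v ^ 2 / 2 by ring] at h
  refine nonneg_of_mul_nonneg_right (a := v ^ 2) ?_ (by positivity)
  linarith

theorem stmt_3_general (a b lam mu p t : ℝ) (hlam : lam ∈ Set.Ico (0:ℝ) 1)
    (hmu : mu ∈ Set.Ioo (0:ℝ) 1) (hp : p = (lam + (1 - lam) * mu) / (1 + lam)) :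
    (Real.exp (t * ((1 - mu) * a + mu * b) +
        t ^ 2 / 2 * ((1 + lam) / (1 - lam)) * ((b - a) ^ 2 / 4))) ^ 2 -
      (1 + lam) * ((1 - p) * Real.exp (t * a) + p * Real.exp (t * b)) *
        Real.exp (t * ((1 - mu) * a + mu * b) +
          t ^ 2 / 2 * ((1 + lam) / (1 - lam)) * ((b - a) ^ 2 / 4)) +
      lam * Real.exp (t * (a + b)) ≥ 0 := by
  obtain ⟨hlam₀, hlam₁⟩ := hlam
  set α := (1 + lam) / (1 - lam) with hα
  set v := t * (b - a) / 2
  set m := 2 * mu - 1 with hm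
  set r := m * v + α * v ^ 2 / 2
  set c := exp (t * (a + b) / 2)
  have hΦ := mul_cosh_sub_cosh_add_sinh_sub_mul_sinh_nonneg (α := α) (m := m)
    ((le_div_iff₀ (by linarith)).mpr (by linarith)) ⟨by linarith [hmu.1], by linarith [hmu.2]⟩ v
  have hθ : exp (t * ((1 - mu) * a + mu * b) + t ^ 2 / 2 * α * ((b - a) ^ 2 / 4)) =
      c * exp r := by
    rw [← exp_add]; congr 1; simp only [r, v, m]; ring
  have ha : exp (t * a) = c * exp (-v) := by rw [← exp_add]; congr 1; simp only [v]; ring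
  have hb : exp (t * b) = c * exp v := by rw [← exp_add]; congr 1; simp only [v]; ring
  have hab : exp (t * (a + b)) = c ^ 2 := by rw [sq, ← exp_add]; congr 1; ring
  rw [ge_iff_le, hθ, ha, hb, hab, hp]
  have hquad : (c * exp r) ^ 2 -
        (1 + lam) * ((1 - (lam + (1 - lam) * mu) / (1 + lam)) * (c * exp (-v)) +
          (lam + (1 - lam) * mu) / (1 + lam) * (c * exp v)) * (c * exp r) + lam * c ^ 2 =
      c ^ 2 * exp r * (1 - lam) * (α * (cosh r - cosh v) + (sinh r - m * sinh v)) := by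
    rw [cosh_eq, cosh_eq, sinh_eq, sinh_eq, exp_neg, exp_neg, hα, hm]
    field_simp
    ring
  rw [hquad]
  have : 0 < 1 - lam := by linarith
  positivity

theorem stmt_3 (a b lam mu p t : ℝ) (hab : a < b) (hlam : lam ∈ Set.Ico (0:ℝ) 1)
    (hmu : mu ∈ Set.Ioo (0:ℝ) 1) (hp : p = (lam + (1 - lam) * mu) / (1 + lam)) :
    (Real.exp (t * ((1 - mu) * a + mu * b) +
        t ^ 2 / 2 * ((1 + lam) / (1 - lam)) * ((b - a) ^ 2 / 4))) ^ 2 -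
      (1 + lam) * ((1 - p) * Real.exp (t * a) + p * Real.exp (t * b)) *
        Real.exp (t * ((1 - mu) * a + mu * b) +
          t ^ 2 / 2 * ((1 + lam) / (1 - lam)) * ((b - a) ^ 2 / 4)) +
      lam * Real.exp (t * (a + b)) ≥ 0 :=
  stmt_3_general a b lam mu p t hlam hmu hp
end

section
/- Let a < b be reals, λ ∈ [0,1), μ ∈ (0,1), p = (λ + (1-λ)μ)/(1+λ), and let θ(t) denote the largest eigenvalue of the 2×2 matrix E^{ty/2} Q̂ E^{ty/2}, where Q̂ = λI + (1-λ)[(1-μ, μ); (1-μ, μ)] and E^{ty/2} = diag(e^{ta/2}, e^{tb/2}). Then θ(t) ≤ exp(t·((1-μ)a + μb) + (t²/2)·((1+λ)/(1-λ))·(b-a)²/4) for every t ∈ ℝ. -/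
/-!
The eigenvalue `θ` is a root of `q(X) = X² - T X + D` with `T` the trace and
`D = λ e^{t(a+b)}` the determinant of `E Q E`; any `u > 0` with `u² ≥ D` and `T ≤ u + D / u`
(i.e. `q(u) ≥ 0`) dominates both roots. Take `u = C e^V` with `C = e^{t(a+b)/2}`,
`w = t(b-a)/2` and `V = (2μ-1) w + (1+λ)/(1-λ) · w²/2`.
Then `T / C = (1+λ)((1-p) e^{-w} + p e^w)`,
which Hoeffding's lemma for a `±1` variable with `P(+1) = p` bounds by
`(1+λ) e^{(1-λ)V/(1+λ)}`, and weighted AM-GM bounds that by `e^V + λ e^{-V}`.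
Completing the square gives `e^{2V} ≥ 1 + 2V ≥ λ`, i.e. `u² ≥ D`.
-/

open Real MeasureTheory ProbabilityTheory

noncomputable def biasedSignMeasure (p : ℝ) : Measure ℝ :=
  ENNReal.ofReal (1 - p) • Measure.dirac (-1) + ENNReal.ofReal p • Measure.dirac 1

section biasedSign

variable {p : ℝ}

lemma isProbabilityMeasure_biasedSignMeasure (hp0 : 0 ≤ p) (hp1 : p ≤ 1) :
    IsProbabilityMeasure (biasedSignMeasure p) := by
  constructor
  simp [biasedSignMeasure, ← ENNReal.ofReal_add (sub_nonneg.2 hp1) hp0]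

lemma integral_biasedSignMeasure (hp0 : 0 ≤ p) (hp1 : p ≤ 1) (f : ℝ → ℝ) :
    ∫ x, f x ∂biasedSignMeasure p = (1 - p) * f (-1) + p * f 1 := by
  rw [biasedSignMeasure, integral_add_measure, integral_smul_measure, integral_smul_measure,
    integral_dirac, integral_dirac, ENNReal.toReal_ofReal (sub_nonneg.2 hp1),
    ENNReal.toReal_ofReal hp0, smul_eq_mul, smul_eq_mul]
  all_goals exact (integrable_dirac (by simp)).smul_measure (by simp)

/-- Hoeffding's lemma for the `±1`-valued random variable with law `biasedSignMeasure p`. -/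
lemma one_sub_mul_exp_neg_add_mul_exp_le (hp0 : 0 ≤ p) (hp1 : p ≤ 1) (w : ℝ) :
    (1 - p) * exp (-w) + p * exp w ≤ exp ((2 * p - 1) * w + w ^ 2 / 2) := by
  have := isProbabilityMeasure_biasedSignMeasure hp0 hp1
  have hbdd : ∀ᵐ x ∂biasedSignMeasure p, id x ∈ Set.Icc (-1 : ℝ) 1 := by
    simp only [biasedSignMeasure, ae_add_measure_iff]
    constructor <;>
      exact Measure.ae_smul_measure ((ae_dirac_iff measurableSet_Icc).2 (by norm_num)) _
  have h := (hasSubgaussianMGF_of_mem_Icc aemeasurable_id hbdd).mgf_le w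
  have hmean : (biasedSignMeasure p)[id] = 2 * p - 1 := by
    rw [integral_biasedSignMeasure hp0 hp1]; simp; ring
  simp only [mgf, hmean, integral_biasedSignMeasure hp0 hp1] at h
  norm_num at h
  calc (1 - p) * exp (-w) + p * exp w
      = ((1 - p) * exp (w * (-1 - (2 * p - 1))) + p * exp (w * (1 - (2 * p - 1))))
          * exp ((2 * p - 1) * w) := by
        rw [add_mul, mul_assoc, mul_assoc, ← exp_add, ← exp_add]; ring_nf
    _ ≤ exp (w ^ 2 / 2) * exp ((2 * p - 1) * w) := by gcongr
    _ = exp ((2 * p - 1) * w + w ^ 2 / 2) := by rw [← exp_add, add_comm]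

end biasedSign

lemma Matrix.sq_sub_trace_mul_add_det_eq_zero {K : Type*} [Field K]
    {M : Matrix (Fin 2) (Fin 2) K} {θ : K} {v : Fin 2 → K} (hv : v ≠ 0)
    (h : M.mulVec v = θ • v) : θ ^ 2 - M.trace * θ + M.det = 0 := by
  have hdet : (M - θ • 1).det = 0 :=
    Matrix.exists_mulVec_eq_zero_iff.1
      ⟨v, hv, by rw [Matrix.sub_mulVec, h, Matrix.smul_mulVec, Matrix.one_mulVec, sub_self]⟩
  rw [Matrix.det_fin_two] at hdet
  rw [Matrix.trace_fin_two, Matrix.det_fin_two]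
  simp at hdet
  linear_combination hdet

lemma trace_diagonal_mul_mul_diagonal (x y : ℝ) (Q : Matrix (Fin 2) (Fin 2) ℝ) :
    (!![x, 0; 0, y] * Q * !![x, 0; 0, y]).trace = x ^ 2 * Q 0 0 + y ^ 2 * Q 1 1 := by
  rw [Matrix.eta_fin_two Q]
  simp [Matrix.trace_fin_two]
  ring

lemma det_diagonal_mul_mul_diagonal (x y : ℝ) (Q : Matrix (Fin 2) (Fin 2) ℝ) :
    (!![x, 0; 0, y] * Q * !![x, 0; 0, y]).det = (x * y) ^ 2 * Q.det := by
  rw [Matrix.det_mul, Matrix.det_mul, Matrix.det_fin_two_of]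
  ring

lemma le_of_sq_sub_mul_add_eq_zero {T D θ u : ℝ} (hθ : θ ^ 2 - T * θ + D = 0) (hu : 0 < u)
    (hD : D ≤ u ^ 2) (hT : T ≤ u + D / u) : θ ≤ u := by
  have hTu : T * u ≤ u ^ 2 + D := by
    have := mul_le_mul_of_nonneg_right hT hu.le
    rwa [add_mul, div_mul_cancel₀ _ hu.ne', ← sq] at this
  by_contra! hlt
  -- `T = θ + D / θ`, so `0 ≤ u ^ 2 - T * u + D = (u - θ) * (u - D / θ)`; with `u < θ`
  -- this gives `θ * u ≤ D`.
  have hθu : θ * u ≤ D := by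
    nlinarith [mul_pos hu (sub_pos.2 hlt)]
  nlinarith

lemma mul_exp_le_exp_add_mul_exp_neg {lam : ℝ} (hlam : 0 ≤ lam) (v : ℝ) :
    (1 + lam) * exp ((1 - lam) * v / (1 + lam)) ≤ exp v + lam * exp (-v) := by
  set c := (1 - lam) * v / (1 + lam)
  have hc : (1 + lam) * c = (1 - lam) * v := by unfold c; field_simp
  have tangent (x : ℝ) : exp c * (1 + (x - c)) ≤ exp x := by
    calc exp c * (1 + (x - c)) ≤ exp c * exp (x - c) := by
          gcongr; linarith [add_one_le_exp (x - c)]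
      _ = exp x := by rw [← exp_add]; ring_nf
  nlinarith [tangent v, tangent (-v), exp_pos c]

lemma lam_le_exp_two_mul {lam mu : ℝ} (hlam0 : 0 ≤ lam) (hlam1 : lam < 1) (hmu0 : 0 ≤ mu)
    (hmu1 : mu ≤ 1) (w : ℝ) :
    lam ≤ exp (2 * ((2 * mu - 1) * w + (1 + lam) / (1 - lam) * (w ^ 2 / 2))) := by
  set κ := (1 + lam) / (1 - lam)
  have hκ : κ * (1 - lam) = 1 + lam := div_mul_cancel₀ _ (by linarith)
  have hκpos : 0 < κ := div_pos (by linarith) (by linarith)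
  have hlin : lam ≤ 1 + 2 * ((2 * mu - 1) * w + κ * (w ^ 2 / 2)) := by
    refine le_of_mul_le_mul_left ?_ hκpos
    nlinarith [sq_nonneg (κ * w + (2 * mu - 1)), mul_nonneg hmu0 (sub_nonneg.2 hmu1)]
  linarith [add_one_le_exp (2 * ((2 * mu - 1) * w + κ * (w ^ 2 / 2)))]

lemma trace_le_exp_add_mul_exp_neg {lam mu : ℝ} (hlam0 : 0 ≤ lam) (hlam1 : lam < 1)
    (hmu0 : 0 ≤ mu) (hmu1 : mu ≤ 1) (w : ℝ) :
    (lam + (1 - lam) * (1 - mu)) * exp (-w) + (lam + (1 - lam) * mu) * exp w ≤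
      exp ((2 * mu - 1) * w + (1 + lam) / (1 - lam) * (w ^ 2 / 2)) +
        lam * exp (-((2 * mu - 1) * w + (1 + lam) / (1 - lam) * (w ^ 2 / 2))) := by
  set p := (lam + (1 - lam) * mu) / (1 + lam)
  have hpos : 0 < 1 + lam := by linarith
  have hne : 1 - lam ≠ 0 := by linarith
  have hp0 : 0 ≤ p := by positivity
  have hp1 : p ≤ 1 := by rw [div_le_one hpos]; nlinarith
  have hexponent : (2 * p - 1) * w + w ^ 2 / 2 =
      (1 - lam) * ((2 * mu - 1) * w + (1 + lam) / (1 - lam) * (w ^ 2 / 2)) / (1 + lam) := by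
    unfold p; field_simp; ring
  calc (lam + (1 - lam) * (1 - mu)) * exp (-w) + (lam + (1 - lam) * mu) * exp w
      = (1 + lam) * ((1 - p) * exp (-w) + p * exp w) := by unfold p; field_simp; ring
    _ ≤ (1 + lam) * exp ((2 * p - 1) * w + w ^ 2 / 2) := by
        gcongr; exact one_sub_mul_exp_neg_add_mul_exp_le hp0 hp1 w
    _ ≤ _ := by rw [hexponent]; exact mul_exp_le_exp_add_mul_exp_neg hlam0 _

lemma char_eq_of_tilted_eigenvector {a b lam mu t θ : ℝ} {Q E : Matrix (Fin 2) (Fin 2) ℝ}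
    (hQ : Q = lam • (1 : Matrix (Fin 2) (Fin 2) ℝ) + (1 - lam) • !![1 - mu, mu; 1 - mu, mu])
    (hE : E = !![exp (t * a / 2), 0; 0, exp (t * b / 2)])
    {v : Fin 2 → ℝ} (hv : v ≠ 0) (heig : (E * Q * E).mulVec v = θ • v) :
    θ ^ 2 - exp (t * (a + b) / 2) * ((lam + (1 - lam) * (1 - mu)) * exp (-(t * (b - a) / 2)) +
      (lam + (1 - lam) * mu) * exp (t * (b - a) / 2)) * θ + lam * exp (t * (a + b) / 2) ^ 2 =
        0 := by
  have hchar := Matrix.sq_sub_trace_mul_add_det_eq_zero hv heig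
  have hQdet : Q.det = lam := by rw [hQ, Matrix.det_fin_two]; simp; ring
  have hQ00 : Q 0 0 = lam + (1 - lam) * (1 - mu) := by simp [hQ]
  have hQ11 : Q 1 1 = lam + (1 - lam) * mu := by simp [hQ]
  have hx : exp (t * a / 2) ^ 2 = exp (t * (a + b) / 2) * exp (-(t * (b - a) / 2)) := by
    rw [← exp_nat_mul, ← exp_add]; ring_nf
  have hy : exp (t * b / 2) ^ 2 = exp (t * (a + b) / 2) * exp (t * (b - a) / 2) := by
    rw [← exp_nat_mul, ← exp_add]; ring_nf
  have hxy : exp (t * a / 2) * exp (t * b / 2) = exp (t * (a + b) / 2) := by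
    rw [← exp_add]; ring_nf
  rw [hE, trace_diagonal_mul_mul_diagonal, det_diagonal_mul_mul_diagonal, hQdet, hQ00, hQ11,
    hx, hy, hxy] at hchar
  linear_combination hchar

theorem stmt_4_general (a b lam mu t : ℝ) (hlam : lam ∈ Set.Ico (0:ℝ) 1)
    (hmu : mu ∈ Set.Ioo (0:ℝ) 1)
    (Q E : Matrix (Fin 2) (Fin 2) ℝ)
    (hQ : Q = lam • (1 : Matrix (Fin 2) (Fin 2) ℝ) + (1 - lam) • !![1 - mu, mu; 1 - mu, mu])
    (hE : E = !![Real.exp (t * a / 2), 0; 0, Real.exp (t * b / 2)])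
    (θ : ℝ) (v : Fin 2 → ℝ) (hv : v ≠ 0) (heig : (E * Q * E).mulVec v = θ • v) :
    θ ≤ Real.exp (t * ((1 - mu) * a + mu * b) +
      t ^ 2 / 2 * ((1 + lam) / (1 - lam)) * ((b - a) ^ 2 / 4)) := by
  obtain ⟨hlam0, hlam1⟩ := hlam
  obtain ⟨hmu0, hmu1⟩ := hmu
  have hchar := char_eq_of_tilted_eigenvector hQ hE hv heig
  have hexponent : t * ((1 - mu) * a + mu * b) + t ^ 2 / 2 * ((1 + lam) / (1 - lam)) *
      ((b - a) ^ 2 / 4) = t * (a + b) / 2 + ((2 * mu - 1) * (t * (b - a) / 2) +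
        (1 + lam) / (1 - lam) * ((t * (b - a) / 2) ^ 2 / 2)) := by
    ring
  rw [hexponent, exp_add]
  set C := exp (t * (a + b) / 2)
  set w := t * (b - a) / 2
  set V := (2 * mu - 1) * w + (1 + lam) / (1 - lam) * (w ^ 2 / 2)
  refine le_of_sq_sub_mul_add_eq_zero hchar (by positivity) ?_ ?_
  · rw [mul_pow, ← exp_nat_mul V, Nat.cast_ofNat, mul_comm]
    gcongr
    exact lam_le_exp_two_mul hlam0 hlam1 hmu0.le hmu1.le w
  · calc C * ((lam + (1 - lam) * (1 - mu)) * exp (-w) + (lam + (1 - lam) * mu) * exp w)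
        ≤ C * (exp V + lam * exp (-V)) := by
          gcongr C * ?_; exact trace_le_exp_add_mul_exp_neg hlam0 hlam1 hmu0.le hmu1.le w
      _ = C * exp V + lam * C ^ 2 / (C * exp V) := by
          rw [exp_neg]; field_simp

theorem stmt_4 (a b lam mu t : ℝ) (hab : a < b) (hlam : lam ∈ Set.Ico (0:ℝ) 1)
    (hmu : mu ∈ Set.Ioo (0:ℝ) 1)
    (Q E : Matrix (Fin 2) (Fin 2) ℝ)
    (hQ : Q = lam • (1 : Matrix (Fin 2) (Fin 2) ℝ) + (1 - lam) • !![1 - mu, mu; 1 - mu, mu])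
    (hE : E = !![Real.exp (t * a / 2), 0; 0, Real.exp (t * b / 2)])
    (θ : ℝ) (v : Fin 2 → ℝ) (hv : v ≠ 0) (heig : (E * Q * E).mulVec v = θ • v) :
    θ ≤ Real.exp (t * ((1 - mu) * a + mu * b) +
      t ^ 2 / 2 * ((1 + lam) / (1 - lam)) * ((b - a) ^ 2 / 4)) :=
  stmt_4_general a b lam mu t hlam hmu Q E hQ hE θ v hv heig
end

section
/- Let H = L²(π) for a probability measure π, let P be a bounded linear operator on H with PΠ = ΠP = Π and ‖P - Π‖ ≤ λ < 1, where Π h = (∫h dπ)·1 is the rank-one projection onto constants. Define P̂ = λI + (1-λ)Π. Then for all h₁, h₂ ∈ H, |⟨Ph₁, h₂⟩| ≤ ⟨P̂h₁, h₁⟩^{1/2} ⟨P̂h₂, h₂⟩^{1/2}. -/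
/-!
With `h = (h - Π h) + Π h` split orthogonally, `⟪P h₁, h₂⟫ = ⟪(P - Π)(h₁ - Π h₁), h₂ - Π h₂⟫ +
⟪Π h₁, Π h₂⟫` and `⟪P̂ h, h⟫ = λ ‖h - Π h‖² + ‖Π h‖²`. Bounding the first inner product by
`λ ‖h₁ - Π h₁‖ ‖h₂ - Π h₂‖`, the claim becomes the Cauchy–Schwarz inequality in `ℝ²` for the
vectors `(√λ ‖h_i - Π h_i‖, ‖Π h_i‖)`.
-/

open MeasureTheory

theorem mul_add_mul_le_sqrt_mul_sqrt {lam : ℝ} (hlam : 0 ≤ lam) (a b c d : ℝ) :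
    lam * a * b + c * d ≤ √(lam * a ^ 2 + c ^ 2) * √(lam * b ^ 2 + d ^ 2) := by
  rw [← Real.sqrt_mul (by positivity)]
  refine (le_abs_self _).trans (Real.abs_le_sqrt ?_)
  nlinarith [mul_nonneg hlam (sq_nonneg (a * d - b * c))]

section SymmetricProjection

variable {E : Type*} [NormedAddCommGroup E] [InnerProductSpace ℝ E] {Pi : E →L[ℝ] E}
  (hPi : (Pi : E →ₗ[ℝ] E).IsSymmetricProjection)
include hPi

theorem LinearMap.IsSymmetricProjection.apply_apply (x : E) : Pi (Pi x) = Pi x :=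
  congr($hPi.isIdempotentElem x)

theorem LinearMap.IsSymmetricProjection.inner_apply_sub_apply_self (g h : E) :
    inner ℝ (Pi g) (h - Pi h) = 0 := by
  rw [← ContinuousLinearMap.coe_coe, hPi.isSymmetric, map_sub, ContinuousLinearMap.coe_coe,
    hPi.apply_apply, sub_self, inner_zero_right]

theorem LinearMap.IsSymmetricProjection.inner_apply_left_eq_inner_apply_apply (g h : E) :
    inner ℝ (Pi g) h = inner ℝ (Pi g) (Pi h) := by
  rw [← sub_eq_zero, ← inner_sub_right, hPi.inner_apply_sub_apply_self]

theorem LinearMap.IsSymmetricProjection.norm_sq_eq_norm_sub_apply_sq_add_norm_apply_sq (h : E) :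
    ‖h‖ ^ 2 = ‖h - Pi h‖ ^ 2 + ‖Pi h‖ ^ 2 := by
  have := norm_add_sq_real (h - Pi h) (Pi h)
  rw [sub_add_cancel, real_inner_comm, hPi.inner_apply_sub_apply_self] at this
  linarith

theorem LinearMap.IsSymmetricProjection.inner_leonPerron_apply_self (lam : ℝ) (h : E) :
    inner ℝ ((lam • ContinuousLinearMap.id ℝ E + (1 - lam) • Pi) h) h =
      lam * ‖h - Pi h‖ ^ 2 + ‖Pi h‖ ^ 2 := by
  simp only [_root_.add_apply, _root_.smul_apply,
    ContinuousLinearMap.id_apply, inner_add_left, real_inner_smul_left,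
    hPi.inner_apply_left_eq_inner_apply_apply h h, real_inner_self_eq_norm_sq,
    hPi.norm_sq_eq_norm_sub_apply_sq_add_norm_apply_sq h]
  ring

theorem LinearMap.IsSymmetricProjection.inner_apply_eq_inner_sub_add {P : E →L[ℝ] E}
    (hPPi : P.comp Pi = Pi) (hPiP : Pi.comp P = Pi) (h₁ h₂ : E) :
    inner ℝ (P h₁) h₂ =
      inner ℝ ((P - Pi) (h₁ - Pi h₁)) (h₂ - Pi h₂) + inner ℝ (Pi h₁) (Pi h₂) := by
  have hP : (P - Pi) (h₁ - Pi h₁) = P h₁ - Pi h₁ := by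
    simp only [_root_.sub_apply, map_sub, hPi.apply_apply,
      ← ContinuousLinearMap.comp_apply P Pi, hPPi]
    abel
  have hadj : inner ℝ (P h₁) (Pi h₂) = inner ℝ (Pi h₁) (Pi h₂) := by
    rw [← ContinuousLinearMap.coe_coe Pi, ← hPi.isSymmetric, ContinuousLinearMap.coe_coe,
      ← ContinuousLinearMap.comp_apply, hPiP, hPi.inner_apply_left_eq_inner_apply_apply]
  rw [hP, inner_sub_left, hPi.inner_apply_sub_apply_self, inner_sub_right, hadj]
  ring

theorem LinearMap.IsSymmetricProjection.abs_inner_apply_le {P : E →L[ℝ] E}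
    (hPPi : P.comp Pi = Pi) (hPiP : Pi.comp P = Pi) {lam : ℝ} (hgap : ‖P - Pi‖ ≤ lam) (h₁ h₂ : E) :
    |inner ℝ (P h₁) h₂| ≤
      √(inner ℝ ((lam • ContinuousLinearMap.id ℝ E + (1 - lam) • Pi) h₁) h₁) *
      √(inner ℝ ((lam • ContinuousLinearMap.id ℝ E + (1 - lam) • Pi) h₂) h₂) := by
  have hlam : 0 ≤ lam := (norm_nonneg _).trans hgap
  have hgap_apply : ‖(P - Pi) (h₁ - Pi h₁)‖ ≤ lam * ‖h₁ - Pi h₁‖ :=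
    (P - Pi).le_of_opNorm_le hgap _
  rw [hPi.inner_leonPerron_apply_self, hPi.inner_leonPerron_apply_self,
    hPi.inner_apply_eq_inner_sub_add hPPi hPiP]
  calc _ ≤ |inner ℝ ((P - Pi) (h₁ - Pi h₁)) (h₂ - Pi h₂)| + |inner ℝ (Pi h₁) (Pi h₂)| :=
          abs_add_le _ _
    _ ≤ lam * ‖h₁ - Pi h₁‖ * ‖h₂ - Pi h₂‖ + ‖Pi h₁‖ * ‖Pi h₂‖ := by
        gcongr
        · exact (abs_real_inner_le_norm _ _).trans (by gcongr)
        · exact abs_real_inner_le_norm _ _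
    _ ≤ _ := mul_add_mul_le_sqrt_mul_sqrt hlam _ _ _ _

end SymmetricProjection

section ProjectionOntoConstants

variable {Ω : Type*} [MeasurableSpace Ω] {π : Measure Ω}
  {Pi : Lp ℝ 2 π →L[ℝ] Lp ℝ 2 π}
  (hPi : ∀ h : Lp ℝ 2 π, (Pi h : Ω → ℝ) =ᵐ[π] fun _ => ∫ y, h y ∂π)
include hPi

theorem inner_apply_eq_integral_mul_integral (g f : Lp ℝ 2 π) :
    inner ℝ (Pi g) f = (∫ y, g y ∂π) * ∫ y, f y ∂π := by
  rw [L2.inner_def, ← integral_const_mul]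
  refine integral_congr_ae ?_
  filter_upwards [hPi g] with x hx
  rw [hx, RCLike.inner_apply, conj_trivial, mul_comm]

theorem integral_apply_eq_integral [IsProbabilityMeasure π] (f : Lp ℝ 2 π) :
    ∫ y, Pi f y ∂π = ∫ y, f y ∂π := by
  rw [integral_congr_ae (hPi f), integral_const, probReal_univ, one_smul]

theorem isSymmetricProjection_of_ae_eq_integral [IsProbabilityMeasure π] :
    (Pi : Lp ℝ 2 π →ₗ[ℝ] Lp ℝ 2 π).IsSymmetricProjection where
  isIdempotentElem := LinearMap.ext fun f => Lp.ext <| by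
    filter_upwards [hPi (Pi f), hPi f] with x hPPf hPf
    simp only [Module.End.mul_apply, ContinuousLinearMap.coe_coe, hPPf, hPf,
      integral_apply_eq_integral hPi]
  isSymmetric g f := by
    simp only [ContinuousLinearMap.coe_coe]
    rw [real_inner_comm (Pi f), inner_apply_eq_integral_mul_integral hPi,
      inner_apply_eq_integral_mul_integral hPi, mul_comm]

end ProjectionOntoConstants

open MeasureTheory in
theorem stmt_7_general {Ω : Type*} [MeasurableSpace Ω] (π : Measure Ω) [IsProbabilityMeasure π]
    (lam : ℝ)
    (P Pi : Lp ℝ 2 π →L[ℝ] Lp ℝ 2 π)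
    (hPi : ∀ h : Lp ℝ 2 π, (Pi h : Ω → ℝ) =ᵐ[π] fun _ => ∫ y, h y ∂π)
    (hPPi : P.comp Pi = Pi) (hPiP : Pi.comp P = Pi)
    (hgap : ‖P - Pi‖ ≤ lam)
    (h₁ h₂ : Lp ℝ 2 π) :
    |inner (𝕜 := ℝ) (P h₁) h₂| ≤
      Real.sqrt (inner (𝕜 := ℝ)
        ((lam • ContinuousLinearMap.id ℝ (Lp ℝ 2 π) + (1 - lam) • Pi) h₁) h₁) *
      Real.sqrt (inner (𝕜 := ℝ)
        ((lam • ContinuousLinearMap.id ℝ (Lp ℝ 2 π) + (1 - lam) • Pi) h₂) h₂) :=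
  (isSymmetricProjection_of_ae_eq_integral hPi).abs_inner_apply_le hPPi hPiP hgap h₁ h₂

open MeasureTheory in
theorem stmt_7 {Ω : Type*} [MeasurableSpace Ω] (π : Measure Ω) [IsProbabilityMeasure π]
    (lam : ℝ) (hlam : lam < 1)
    (P Pi : Lp ℝ 2 π →L[ℝ] Lp ℝ 2 π)
    (hPi : ∀ h : Lp ℝ 2 π, (Pi h : Ω → ℝ) =ᵐ[π] fun _ => ∫ y, h y ∂π)
    (hPPi : P.comp Pi = Pi) (hPiP : Pi.comp P = Pi)
    (hgap : ‖P - Pi‖ ≤ lam)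
    (h₁ h₂ : Lp ℝ 2 π) :
    |inner (𝕜 := ℝ) (P h₁) h₂| ≤
      Real.sqrt (inner (𝕜 := ℝ)
        ((lam • ContinuousLinearMap.id ℝ (Lp ℝ 2 π) + (1 - lam) • Pi) h₁) h₁) *
      Real.sqrt (inner (𝕜 := ℝ)
        ((lam • ContinuousLinearMap.id ℝ (Lp ℝ 2 π) + (1 - lam) • Pi) h₂) h₂) :=
  stmt_7_general π lam P Pi hPi hPPi hPiP hgap h₁ h₂
end

section
/- Let (X, B, π) be a probability space, c ∈ [0,1), and P̂_c = cI + (1-c)Π on L²(π) where Πh = π(h)·1. Let f : X → ℝ be a bounded measurable function, and suppose r⋆ > c·esssup(e^f) satisfies π((1-c)e^f/(r⋆ - c e^f)) = 1. Then h⋆ = (1-c)e^{f/2}/(r⋆ - c e^f) ∈ L²(π) is an eigenfunction of the operator E^{f/2} P̂_c E^{f/2} (where E^{g} denotes multiplication by e^{g}) with eigenvalue r⋆. -/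
/-!
Since `c ≥ 0` and `r⋆ > c · esssup e^f`, the denominator `r⋆ - c e^f` is a.e. bounded below by
the positive constant `r⋆ - c · esssup e^f`, so the bounded function `h⋆` lies in `L²(π)`.
Because `e^{f/2} h⋆ = (1-c) e^f / (r⋆ - c e^f)`, the normalisation `F(r⋆) = 1` says exactly
`π(e^{f/2} h⋆) = 1`, and then `c e^f h⋆ + (1-c) e^{f/2} = r⋆ h⋆` pointwise.
-/

open MeasureTheory
open Real (exp exp_le_exp exp_pos exp_add)

namespace PerronEigenfunction

variable {Ω : Type*}

noncomputable def eigenfun (c r : ℝ) (f : Ω → ℝ) : Ω → ℝ :=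
  fun x => (1 - c) * exp (f x / 2) / (r - c * exp (f x))

lemma exp_half_mul_eigenfun (c r : ℝ) (f : Ω → ℝ) (x : Ω) :
    exp (f x / 2) * eigenfun c r f x = (1 - c) * exp (f x) / (r - c * exp (f x)) := by
  rw [eigenfun, ← mul_div_assoc, mul_left_comm, ← exp_add, add_halves]

lemma mul_eigenfun_add_eq_mul_eigenfun {c r : ℝ} {f : Ω → ℝ} {x : Ω} (hx : r - c * exp (f x) ≠ 0) :
    c * exp (f x) * eigenfun c r f x + (1 - c) * exp (f x / 2) = r * eigenfun c r f x := by
  rw [eigenfun]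
  field_simp
  ring

variable [MeasurableSpace Ω] {π : Measure Ω}

lemma ae_sub_mul_essSup_exp_le {c C r : ℝ} {f : Ω → ℝ} (hc : 0 ≤ c) (hfC : ∀ x, f x ≤ C) :
    ∀ᵐ x ∂π, r - c * essSup (fun x => exp (f x)) π ≤ r - c * exp (f x) := by
  have hbdd : Filter.IsBoundedUnder (· ≤ ·) (ae π) (fun x => exp (f x)) :=
    Filter.isBoundedUnder_of ⟨exp C, fun x => exp_le_exp.2 (hfC x)⟩
  filter_upwards [ae_le_essSup hbdd] with x hx
  linarith [mul_le_mul_of_nonneg_left hx hc]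

lemma memLp_eigenfun [IsFiniteMeasure π] (p : ENNReal) {c C r : ℝ} {f : Ω → ℝ}
    (hc : 0 ≤ c) (hf : Measurable f) (hfC : ∀ x, f x ≤ C)
    (hr : c * essSup (fun x => exp (f x)) π < r) :
    MemLp (eigenfun c r f) p π := by
  set δ := r - c * essSup (fun x => exp (f x)) π
  have hδ : 0 < δ := sub_pos.2 hr
  have hmeas : Measurable (eigenfun c r f) :=
    (measurable_const.mul (hf.div_const 2).exp).div (measurable_const.sub (measurable_const.mul hf.exp))
  refine MemLp.of_bound hmeas.aestronglyMeasurable (|1 - c| * exp (C / 2) / δ) ?_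
  filter_upwards [ae_sub_mul_essSup_exp_le (π := π) (r := r) hc hfC] with x hx
  have hnum : exp (f x / 2) ≤ exp (C / 2) := exp_le_exp.2 (by linarith [hfC x])
  rw [eigenfun, norm_div, norm_mul, Real.norm_eq_abs, Real.norm_eq_abs, Real.norm_eq_abs,
    abs_of_pos (exp_pos _), abs_of_pos (hδ.trans_le hx)]
  exact div_le_div₀ (by positivity) (mul_le_mul_of_nonneg_left hnum (abs_nonneg _)) hδ hx

lemma eq_smul_of_integral_eq_one {c r : ℝ} {f : Ω → ℝ} (T : Lp ℝ 2 π →L[ℝ] Lp ℝ 2 π)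
    (hT : ∀ h : Lp ℝ 2 π, (T h : Ω → ℝ) =ᵐ[π] fun x =>
      c * exp (f x) * h x + (1 - c) * exp (f x / 2) * ∫ y, exp (f y / 2) * h y ∂π)
    (h : Lp ℝ 2 π) (hnorm : ∫ y, exp (f y / 2) * h y ∂π = 1)
    (heig : ∀ᵐ x ∂π, c * exp (f x) * h x + (1 - c) * exp (f x / 2) = r * h x) :
    T h = r • h := by
  apply Lp.ext
  filter_upwards [hT h, Lp.coeFn_smul r h, heig] with x hTx hsmul hx
  rw [hTx, hsmul, hnorm, mul_one, hx]
  rfl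

end PerronEigenfunction

open PerronEigenfunction

open MeasureTheory in
theorem stmt_9 {Ω : Type*} [MeasurableSpace Ω] (π : Measure Ω) [IsProbabilityMeasure π]
    (c : ℝ) (hc : c ∈ Set.Ico (0:ℝ) 1) (f : Ω → ℝ) (hf : Measurable f)
    (C : ℝ) (hfb : ∀ x, |f x| ≤ C)
    (T : Lp ℝ 2 π →L[ℝ] Lp ℝ 2 π)
    (hT : ∀ h : Lp ℝ 2 π, (T h : Ω → ℝ) =ᵐ[π] fun x =>
      c * Real.exp (f x) * h x +
        (1 - c) * Real.exp (f x / 2) * ∫ y, Real.exp (f y / 2) * h y ∂π)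
    (rstar : ℝ)
    (hr : c * essSup (fun x => Real.exp (f x)) π < rstar)
    (hF : ∫ x, (1 - c) * Real.exp (f x) / (rstar - c * Real.exp (f x)) ∂π = 1) :
    ∃ hmem : MemLp (fun x => (1 - c) * Real.exp (f x / 2) /
        (rstar - c * Real.exp (f x))) 2 π,
      T (hmem.toLp _) = rstar • hmem.toLp _ := by
  have hfC : ∀ x, f x ≤ C := fun x => (abs_le.1 (hfb x)).2
  have hmem : MemLp (eigenfun c rstar f) 2 π := memLp_eigenfun 2 hc.1 hf hfC hr
  refine ⟨hmem, ?_⟩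
  change T (hmem.toLp (eigenfun c rstar f)) = rstar • hmem.toLp (eigenfun c rstar f)
  refine eq_smul_of_integral_eq_one T hT _ ?_ ?_
  · calc ∫ y, exp (f y / 2) * hmem.toLp _ y ∂π
        = ∫ y, exp (f y / 2) * eigenfun c rstar f y ∂π :=
          integral_congr_ae (hmem.coeFn_toLp.mono fun y hy => congrArg (exp (f y / 2) * ·) hy)
      _ = 1 := by simp_rw [exp_half_mul_eigenfun, hF]
  · filter_upwards [hmem.coeFn_toLp, ae_sub_mul_essSup_exp_le (π := π) (r := rstar) hc.1 hfC]
      with x hx hden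
    rw [hx]
    exact mul_eigenfun_add_eq_mul_eigenfun ((sub_pos.2 hr).trans_le hden).ne'
end

section
/- Let f take finitely many values β₁ > β₂ > ... > β_k each with positive π-probability, let c ∈ (0,1), and define F(r) = Σ_j (1-c)e^{β_j}/(r - c e^{β_j})·π(f = β_j). Then for each j = 1,...,k there exists r_j in the open interval (c e^{β_j}, c e^{β_{j-1}}) (with β₀ = +∞, i.e. r₁ ∈ (ce^{β₁}, ∞)) satisfying F(r_j) = 1. -/
/-!
`F` is a sum of simple poles with positive residues at the points `c e^{β_j}`: between two
consecutive poles it runs from `+∞` to `-∞`, and to the right of the largest pole from `+∞`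
to `0`, so the intermediate value theorem yields a solution of `F r = 1` in each of these `k`
intervals.
-/

open Filter Topology Set

noncomputable def cauchySum {ι : Type*} [Fintype ι] (a C : ι → ℝ) (r : ℝ) : ℝ :=
  ∑ i, C i / (r - a i)

section CauchySum

variable {ι : Type*} [Fintype ι] {a C : ι → ℝ}

lemma cauchySum_eq_add_sum_erase [DecidableEq ι] (q : ι) (r : ℝ) :
    cauchySum a C r = C q / (r - a q) + ∑ i ∈ Finset.univ.erase q, C i / (r - a i) :=
  (Finset.add_sum_erase _ _ (Finset.mem_univ q)).symm

lemma continuousAt_sum_erase_div_sub [DecidableEq ι] (ha : Function.Injective a) (q : ι) :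
    ContinuousAt (fun r => ∑ i ∈ Finset.univ.erase q, C i / (r - a i)) (a q) := by
  refine tendsto_finsetSum _ fun i hi => continuousAt_const.div (by fun_prop) ?_
  exact sub_ne_zero.2 fun h => Finset.ne_of_mem_erase hi (ha h.symm)

lemma continuousOn_cauchySum {s : Set ℝ} (hs : ∀ i, a i ∉ s) :
    ContinuousOn (cauchySum a C) s :=
  continuousOn_finsetSum _ fun i _ => continuousOn_const.div (by fun_prop)
    fun r hr => sub_ne_zero.2 fun h => hs i (h ▸ hr)

lemma tendsto_cauchySum_nhdsGT (ha : Function.Injective a) {q : ι} (hq : 0 < C q) :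
    Tendsto (cauchySum a C) (𝓝[>] a q) atTop := by
  classical
  have hsub : Tendsto (fun r => r - a q) (𝓝[>] a q) (𝓝[>] 0) :=
    tendsto_nhdsWithin_iff.2
      ⟨by simpa using ((continuous_sub_right (a q)).tendsto (a q)).mono_left nhdsWithin_le_nhds,
        eventually_nhdsWithin_of_forall fun r (hr : a q < r) => sub_pos.2 hr⟩
  have hpole : Tendsto (fun r => C q / (r - a q)) (𝓝[>] a q) atTop := by
    simpa only [div_eq_mul_inv, Pi.inv_apply] using hsub.inv_tendsto_nhdsGT_zero.const_mul_atTop hq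
  exact (hpole.atTop_add ((continuousAt_sum_erase_div_sub ha q).tendsto.mono_left
    nhdsWithin_le_nhds)).congr fun r => (cauchySum_eq_add_sum_erase q r).symm

lemma tendsto_cauchySum_nhdsLT (ha : Function.Injective a) {q : ι} (hq : 0 < C q) :
    Tendsto (cauchySum a C) (𝓝[<] a q) atBot := by
  classical
  have hsub : Tendsto (fun r => r - a q) (𝓝[<] a q) (𝓝[<] 0) :=
    tendsto_nhdsWithin_iff.2
      ⟨by simpa using ((continuous_sub_right (a q)).tendsto (a q)).mono_left nhdsWithin_le_nhds,
        eventually_nhdsWithin_of_forall fun r (hr : r < a q) => sub_neg.2 hr⟩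
  have hpole : Tendsto (fun r => C q / (r - a q)) (𝓝[<] a q) atBot := by
    simpa only [div_eq_mul_inv, Pi.inv_apply] using hsub.inv_tendsto_nhdsLT_zero.const_mul_atBot hq
  exact (hpole.atBot_add ((continuousAt_sum_erase_div_sub ha q).tendsto.mono_left
    nhdsWithin_le_nhds)).congr fun r => (cauchySum_eq_add_sum_erase q r).symm

lemma tendsto_cauchySum_atTop : Tendsto (cauchySum a C) atTop (𝓝 0) := by
  unfold cauchySum
  simpa only [← sub_eq_add_neg, id, Finset.sum_const_zero] using
    tendsto_finsetSum Finset.univ fun i _ =>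
      tendsto_const_nhds.div_atTop (a := C i) (tendsto_atTop_add_const_right _ (-a i) tendsto_id)

theorem surjOn_cauchySum_Ioo (ha : Function.Injective a) {p q : ι} (hp : 0 < C p)
    (hq : 0 < C q) (hqp : a q < a p) (hgap : ∀ i, a i ∉ Ioo (a q) (a p)) :
    SurjOn (cauchySum a C) (Ioo (a q) (a p)) univ :=
  isPreconnected_Ioo.intermediate_value_Iii (le_principal_iff.2 (Ioo_mem_nhdsLT hqp))
    (le_principal_iff.2 (Ioo_mem_nhdsGT hqp)) (continuousOn_cauchySum hgap)
    (tendsto_cauchySum_nhdsLT ha hp) (tendsto_cauchySum_nhdsGT ha hq)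

theorem Ioi_zero_subset_image_cauchySum (ha : Function.Injective a) {q : ι} (hq : 0 < C q)
    (hmax : ∀ i, a i ≤ a q) :
    Ioi 0 ⊆ cauchySum a C '' Ioi (a q) :=
  isPreconnected_Ioi.intermediate_value_Ioi (le_principal_iff.2 (Ioi_mem_atTop (a q)))
    (le_principal_iff.2 self_mem_nhdsWithin)
    (continuousOn_cauchySum fun i hi => (hmax i).not_gt hi) tendsto_cauchySum_atTop
    (tendsto_cauchySum_nhdsGT ha hq)

end CauchySum

theorem exists_cauchySum_eq_one_of_strictAnti {k : ℕ} {a C : Fin k → ℝ} (ha : StrictAnti a)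
    (hC : ∀ i, 0 < C i) (j : Fin k) :
    ∃ r, a j < r ∧ (∀ j' < j, r < a j') ∧ cauchySum a C r = 1 := by
  obtain ⟨_ | m, hm⟩ := j
  · obtain ⟨r, hr, hr1⟩ := Ioi_zero_subset_image_cauchySum ha.injective (hC ⟨0, hm⟩)
      (fun i => ha.antitone (Nat.zero_le i.val)) (mem_Ioi.2 one_pos)
    exact ⟨r, hr, fun j' hj' => (Nat.not_lt_zero _ hj').elim, hr1⟩
  · set p : Fin k := ⟨m, by omega⟩
    have hgap : ∀ i, a i ∉ Ioo (a ⟨m + 1, hm⟩) (a p) := fun i hi => by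
      rcases le_or_gt i p with h | h
      · exact (ha.antitone h).not_gt hi.2
      · exact (ha.antitone (Nat.succ_le_of_lt h)).not_gt hi.1
    obtain ⟨r, hr, hr1⟩ := surjOn_cauchySum_Ioo ha.injective (hC p) (hC ⟨m + 1, hm⟩)
      (ha (Nat.lt_succ_self m)) hgap (mem_univ 1)
    exact ⟨r, hr.1, fun j' hj' => hr.2.trans_le (ha.antitone (Nat.le_of_lt_succ hj')), hr1⟩

open MeasureTheory in
theorem stmt_10_general {Ω : Type*} [MeasurableSpace Ω] (π : Measure Ω) [IsProbabilityMeasure π]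
    (c : ℝ) (hc : c ∈ Set.Ioo (0:ℝ) 1) (k : ℕ)
    (f : Ω → ℝ)
    (β : Fin k → ℝ) (hβ : StrictAnti β)
    (hpos : ∀ j, 0 < π {x | f x = β j}) :
    ∀ j : Fin k, ∃ r : ℝ,
      c * Real.exp (β j) < r ∧
      (∀ j' : Fin k, j' < j → r < c * Real.exp (β j')) ∧
      ∑ i : Fin k, (1 - c) * Real.exp (β i) / (r - c * Real.exp (β i)) *
        (π {x | f x = β i}).toReal = 1 := by
  intro j
  have hpoles : StrictAnti fun i => c * Real.exp (β i) :=
    (Real.exp_strictMono.comp_strictAnti hβ).const_mul hc.1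
  have hweights (i : Fin k) : 0 < (1 - c) * Real.exp (β i) * (π {x | f x = β i}).toReal :=
    mul_pos (mul_pos (sub_pos.2 hc.2) (Real.exp_pos _))
      (ENNReal.toReal_pos (hpos i).ne' (measure_ne_top π _))
  obtain ⟨r, hr, hr', hr1⟩ := exists_cauchySum_eq_one_of_strictAnti hpoles hweights j
  exact ⟨r, hr, hr', by simpa only [cauchySum, div_mul_eq_mul_div] using hr1⟩

open MeasureTheory in
theorem stmt_10 {Ω : Type*} [MeasurableSpace Ω] (π : Measure Ω) [IsProbabilityMeasure π]
    (c : ℝ) (hc : c ∈ Set.Ioo (0:ℝ) 1) (k : ℕ) (hk : 0 < k)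
    (f : Ω → ℝ) (hf : Measurable f)
    (β : Fin k → ℝ) (hβ : StrictAnti β)
    (hpos : ∀ j, 0 < π {x | f x = β j})
    (hfull : ∀ᵐ x ∂π, ∃ j, f x = β j) :
    ∀ j : Fin k, ∃ r : ℝ,
      c * Real.exp (β j) < r ∧
      (∀ j' : Fin k, j' < j → r < c * Real.exp (β j')) ∧
      ∑ i : Fin k, (1 - c) * Real.exp (β i) / (r - c * Real.exp (β i)) *
        (π {x | f x = β i}).toReal = 1 :=
  stmt_10_general π c hc k f β hβ hpos
end

section
/- Let T be a positive semi-definite self-adjoint bounded operator on a real Hilbert space H, let v ∈ H, let h ≠ 0 be an eigenvector of T with eigenvalue r > 0, and let h̃ = (⟨h,v⟩/‖h‖²)·h be the projection of v onto the span of h. Then for every n ≥ 1, ⟨v, T^{n-1} v⟩ ≥ ⟨h̃, T^{n-1} h̃⟩ = r^{n-1} ⟨h,v⟩²/‖h‖². -/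
/-!
The line `ℝ ∙ h` is invariant under `S = T ^ (n - 1)` and `h̃` is the orthogonal projection of `v`
onto it, so with `w = v - h̃` the cross terms of `⟪S (h̃ + w), h̃ + w⟫` vanish, while `⟪S w, w⟫ ≥ 0`
because powers of a positive operator are positive (`T ^ (k + 2) = T ∘ T ^ k ∘ T†`).
-/

open scoped InnerProductSpace

theorem Module.End.pow_apply_of_apply_eq_smul {R M : Type*} [CommSemiring R] [AddCommMonoid M]
    [Module R M] {f : Module.End R M} {μ : R} {x : M} (hx : f x = μ • x) (n : ℕ) :
    (f ^ n) x = μ ^ n • x := by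
  induction n with
  | zero => simp
  | succ n ih => rw [pow_succ', Module.End.mul_apply, ih, map_smul, hx, smul_smul, pow_succ]

namespace ContinuousLinearMap

theorem IsPositive.pow {𝕜 E : Type*} [RCLike 𝕜] [NormedAddCommGroup E] [InnerProductSpace 𝕜 E]
    [CompleteSpace E] {T : E →L[𝕜] E} (hT : T.IsPositive) (n : ℕ) : (T ^ n).IsPositive := by
  induction n using Nat.twoStepInduction with
  | zero => simp
  | one => simpa
  | more n ih _ =>
    have hconj : T ^ (n + 2) = T ∘L (T ^ n) ∘L adjoint T := by
      rw [hT.isSelfAdjoint.adjoint_eq, pow_succ, pow_succ', mul_assoc]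
      rfl
    simpa only [hconj] using ih.conj_adjoint T

section Real

variable {F : Type*} [NormedAddCommGroup F] [InnerProductSpace ℝ F] {S : F →L[ℝ] F}

theorem IsPositive.inner_apply_self_le_of_inner_apply_sub_eq_zero (hS : S.IsPositive) {u v : F}
    (huv : ⟪S u, v - u⟫_ℝ = 0) : ⟪S u, u⟫_ℝ ≤ ⟪S v, v⟫_ℝ := by
  set w := v - u
  have hwu : ⟪S w, u⟫_ℝ = 0 := by rw [hS.inner_left_eq_inner_right, real_inner_comm, huv]
  have hv : v = u + w := by simp [w]
  have hw := hS.inner_nonneg_left w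
  rw [hv, map_add, inner_add_left, inner_add_right, inner_add_right, huv, hwu]
  linarith

theorem IsPositive.inner_apply_starProjection_le (hS : S.IsPositive) (K : Submodule ℝ F)
    [K.HasOrthogonalProjection] (hK : ∀ u ∈ K, S u ∈ K) (v : F) :
    ⟪S (K.starProjection v), K.starProjection v⟫_ℝ ≤ ⟪S v, v⟫_ℝ :=
  hS.inner_apply_self_le_of_inner_apply_sub_eq_zero <|
    K.inner_right_of_mem_orthogonal (hK _ (K.starProjection_apply_mem v))
      (K.sub_starProjection_mem_orthogonal v)

end Real

end ContinuousLinearMap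

theorem stmt_11_general {H : Type*} [NormedAddCommGroup H] [InnerProductSpace ℝ H]
    [CompleteSpace H]
    (T : H →L[ℝ] H) (hT : IsSelfAdjoint T)
    (hpos : ∀ x : H, 0 ≤ inner (𝕜 := ℝ) (T x) x)
    (v h : H) (hh : h ≠ 0) (r : ℝ) (heig : T h = r • h)
    (n : ℕ) :
    inner (𝕜 := ℝ) ((T ^ (n - 1)) ((inner (𝕜 := ℝ) h v / ‖h‖ ^ 2) • h))
        ((inner (𝕜 := ℝ) h v / ‖h‖ ^ 2) • h)
      = r ^ (n - 1) * (inner (𝕜 := ℝ) h v) ^ 2 / ‖h‖ ^ 2 ∧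
    r ^ (n - 1) * (inner (𝕜 := ℝ) h v) ^ 2 / ‖h‖ ^ 2 ≤
      inner (𝕜 := ℝ) v ((T ^ (n - 1)) v) := by
  have hpow : (T ^ (n - 1)) h = r ^ (n - 1) • h := by
    simpa only [← ContinuousLinearMap.toLinearMap_pow, ContinuousLinearMap.coe_coe] using
      Module.End.pow_apply_of_apply_eq_smul (f := (T : Module.End ℝ H)) heig (n - 1)
  have hvalue : ⟪(T ^ (n - 1)) ((⟪h, v⟫_ℝ / ‖h‖ ^ 2) • h), (⟪h, v⟫_ℝ / ‖h‖ ^ 2) • h⟫_ℝ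
      = r ^ (n - 1) * ⟪h, v⟫_ℝ ^ 2 / ‖h‖ ^ 2 := by
    rw [map_smul, hpow, smul_smul, real_inner_smul_left, real_inner_smul_right,
      real_inner_self_eq_norm_sq]
    field_simp
  have hinvariant : ∀ u ∈ ℝ ∙ h, (T ^ (n - 1)) u ∈ ℝ ∙ h := by
    intro u hu
    obtain ⟨a, rfl⟩ := Submodule.mem_span_singleton.1 hu
    rw [map_smul, hpow, smul_smul]
    exact Submodule.mem_span_singleton.2 ⟨_, rfl⟩
  have hprojection : (ℝ ∙ h).starProjection v = (⟪h, v⟫_ℝ / ‖h‖ ^ 2) • h := by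
    simpa using Submodule.starProjection_singleton ℝ (v := h) v
  refine ⟨hvalue, hvalue ▸ ?_⟩
  rw [← hprojection, ← real_inner_comm v]
  have hTpos : T.IsPositive := (ContinuousLinearMap.isPositive_iff' T).2 ⟨hT, hpos⟩
  exact (hTpos.pow (n - 1)).inner_apply_starProjection_le _ hinvariant v

theorem stmt_11 {H : Type*} [NormedAddCommGroup H] [InnerProductSpace ℝ H]
    [CompleteSpace H]
    (T : H →L[ℝ] H) (hT : IsSelfAdjoint T)
    (hpos : ∀ x : H, 0 ≤ inner (𝕜 := ℝ) (T x) x)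
    (v h : H) (hh : h ≠ 0) (r : ℝ) (hr : 0 < r) (heig : T h = r • h)
    (n : ℕ) (hn : 1 ≤ n) :
    inner (𝕜 := ℝ) ((T ^ (n - 1)) ((inner (𝕜 := ℝ) h v / ‖h‖ ^ 2) • h))
        ((inner (𝕜 := ℝ) h v / ‖h‖ ^ 2) • h)
      = r ^ (n - 1) * (inner (𝕜 := ℝ) h v) ^ 2 / ‖h‖ ^ 2 ∧
    r ^ (n - 1) * (inner (𝕜 := ℝ) h v) ^ 2 / ‖h‖ ^ 2 ≤
      inner (𝕜 := ℝ) v ((T ^ (n - 1)) v) :=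
  stmt_11_general T hT hpos v h hh r heig n
end

section
/- Let B₂, B₃, ... be i.i.d. Bernoulli(1-λ) with λ ∈ (0,1), B₁ = 1, and W₁, W₂, ... i.i.d. standard Gaussians, all independent. Define X_i = Σ_{j=1}^i (Π_{k=j+1}^i (1-B_k)) B_j W_j. Then for every n ≥ 1 and t ∈ ℝ, E[e^{t Σ_{i=1}^n X_i}] ≥ λ^{n-1} e^{t²n²/2}. Consequently there is no constant α̃ < ∞ such that Σ_{i=1}^n X_i is sub-Gaussian with variance proxy nα̃ for all n. -/
/-!
Let `A` be the event that none of `B₂, …, Bₙ` renews. On `A` every `Xᵢ` equals `W₁`, so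
`∑ Xᵢ = n W₁`, and `A`, of probability `λ^(n-1)`, is independent of `W₁`. Hence
`E[exp (t ∑ Xᵢ)] ≥ E[1_A exp (t n W₁)] = λ^(n-1) exp (t² n² / 2)`. At `t = 1` the right side
grows like `exp (n² / 2 + O(n))`, faster than any `exp (n α̃ / 2)`.
Integrability of `exp (t ∑ Xᵢ)` comes from `|∑ Xᵢ| ≤ n ∑ |Wⱼ|` and the independence of the `Wⱼ`.
-/

open MeasureTheory ProbabilityTheory Finset Real

/-- The solution of `xᵢ = (1 - bᵢ) xᵢ₋₁ + bᵢ wᵢ`, `x₀ = 0`; the paper's `Xᵢ` is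
`renewalChain (B · ω) (W · ω) i`. -/
noncomputable def renewalChain (b w : ℕ → ℝ) (i : ℕ) : ℝ :=
  ∑ j ∈ Icc 1 i, (∏ k ∈ Icc (j + 1) i, (1 - b k)) * (b j * w j)

lemma renewalChain_eq_of_forall_eq_zero {b : ℕ → ℝ} (w : ℕ → ℝ) {i : ℕ} (hi : 1 ≤ i)
    (hb1 : b 1 = 1) (hb : ∀ k ∈ Icc 2 i, b k = 0) : renewalChain b w i = w 1 := by
  rw [renewalChain, sum_eq_single_of_mem 1 (mem_Icc.2 ⟨le_rfl, hi⟩)]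
  · rw [prod_eq_one fun k hk => by rw [hb k hk, sub_zero], hb1, one_mul, one_mul]
  · intro j hj hj1
    rw [hb j (mem_Icc.2 ⟨by grind, (mem_Icc.1 hj).2⟩), zero_mul, mul_zero]

lemma sum_renewalChain_eq_of_forall_eq_zero {b : ℕ → ℝ} (w : ℕ → ℝ) {n : ℕ} (hb1 : b 1 = 1)
    (hb : ∀ k ∈ Icc 2 n, b k = 0) : ∑ i ∈ Icc 1 n, renewalChain b w i = n * w 1 := by
  rw [sum_congr rfl fun i hi => renewalChain_eq_of_forall_eq_zero w (mem_Icc.1 hi).1 hb1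
    fun k hk => hb k (Icc_subset_Icc_right (mem_Icc.1 hi).2 hk)]
  simp

lemma abs_renewalChain_le {b : ℕ → ℝ} (w : ℕ → ℝ) {i : ℕ}
    (hb : ∀ k ∈ Icc 1 i, b k ∈ Set.Icc 0 1) :
    |renewalChain b w i| ≤ ∑ j ∈ Icc 1 i, |w j| := by
  refine (abs_sum_le_sum_abs _ _).trans (sum_le_sum fun j hj => ?_)
  have hprod : |∏ k ∈ Icc (j + 1) i, (1 - b k)| ≤ 1 := by
    rw [abs_prod]
    refine prod_le_one (fun _ _ => abs_nonneg _) fun k hk => ?_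
    obtain ⟨h0, h1⟩ := hb k (mem_Icc.2 ⟨by grind, (mem_Icc.1 hk).2⟩)
    exact abs_le.2 ⟨by linarith, by linarith⟩
  have hbj : |b j| ≤ 1 := by
    obtain ⟨h0, h1⟩ := hb j hj
    exact abs_le.2 ⟨by linarith, h1⟩
  rw [abs_mul, abs_mul]
  calc _ ≤ 1 * (1 * |w j|) := by gcongr
    _ = |w j| := by ring

lemma abs_sum_renewalChain_le {b : ℕ → ℝ} (w : ℕ → ℝ) {n : ℕ}
    (hb : ∀ k ∈ Icc 1 n, b k ∈ Set.Icc 0 1) :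
    |∑ i ∈ Icc 1 n, renewalChain b w i| ≤ n * ∑ j ∈ Icc 1 n, |w j| := by
  calc |∑ i ∈ Icc 1 n, renewalChain b w i| ≤ ∑ _i ∈ Icc 1 n, ∑ j ∈ Icc 1 n, |w j| := by
        refine (abs_sum_le_sum_abs _ _).trans (sum_le_sum fun i hi => ?_)
        have hin := Icc_subset_Icc_right (a := 1) (mem_Icc.1 hi).2
        exact (abs_renewalChain_le w fun k hk => hb k (hin hk)).trans
          (sum_le_sum_of_subset_of_nonneg hin fun _ _ _ => abs_nonneg _)
    _ = n * ∑ j ∈ Icc 1 n, |w j| := by simp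

lemma measureReal_mul_integral_le_integral_of_indep {Ω 𝓧 : Type*} {m mΩ : MeasurableSpace Ω}
    [MeasurableSpace 𝓧] {P : Measure Ω} {Y : Ω → 𝓧} {A : Set Ω} {f : Ω → ℝ} {g : 𝓧 → ℝ}
    (hm : m ≤ mΩ) (hAY : Indep m (MeasurableSpace.comap Y inferInstance) P)
    (hY : AEMeasurable Y P) (hA : MeasurableSet[m] A) (hg : AEStronglyMeasurable g (P.map Y))
    (hf : Integrable f P) (hf0 : 0 ≤ᵐ[P] f) (hfg : ∀ ω ∈ A, f ω = g (Y ω)) :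
    P.real A * ∫ ω, g (Y ω) ∂P ≤ ∫ ω, f ω ∂P :=
  calc P.real A * ∫ ω, g (Y ω) ∂P = ∫ ω in A, g (Y ω) ∂P :=
        (hAY.setIntegral_eq_mul hm hY hA hg).symm
    _ = ∫ ω in A, f ω ∂P := setIntegral_congr_fun (hm _ hA) fun ω hω => (hfg ω hω).symm
    _ ≤ ∫ ω, f ω ∂P := setIntegral_le_integral hf hf0

section Probability

variable {Ω : Type*} [MeasurableSpace Ω] {P : Measure Ω}

lemma ae_mem_Icc_of_map_eq {Y : Ω → ℝ} (hY : Measurable Y) {a b : ENNReal}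
    (hYd : P.map Y = a • Measure.dirac 0 + b • Measure.dirac 1) :
    ∀ᵐ ω ∂P, Y ω ∈ Set.Icc 0 1 := by
  refine (ae_map_iff hY.aemeasurable measurableSet_Icc).1 ?_
  rw [hYd, ae_add_measure_iff]
  constructor <;> refine Measure.ae_smul_measure ((ae_dirac_iff measurableSet_Icc).2 ?_) _ <;>
    norm_num

lemma measure_preimage_zero_of_map_eq {Y : Ω → ℝ} (hY : Measurable Y) {a b : ENNReal}
    (hYd : P.map Y = a • Measure.dirac 0 + b • Measure.dirac 1) : P (Y ⁻¹' {0}) = a := by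
  rw [← Measure.map_apply hY (measurableSet_singleton 0), hYd]
  simp

lemma integrable_exp_mul_of_map_eq_gaussianReal [IsProbabilityMeasure P] {Y : Ω → ℝ}
    {μ : ℝ} {v : NNReal} (hY : P.map Y = gaussianReal μ v) (t : ℝ) :
    Integrable (fun ω => exp (t * Y ω)) P :=
  mgf_pos_iff.1 (by rw [mgf_gaussianReal hY]; positivity)

lemma integrable_exp_mul_sum_abs_of_map_eq_gaussianReal [IsProbabilityMeasure P] {ι : Type*}
    {W : ι → Ω → ℝ} (hW : iIndepFun W P) (hWm : ∀ i, Measurable (W i)) {μ : ℝ} {v : NNReal}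
    (hWd : ∀ i, P.map (W i) = gaussianReal μ v) (s : Finset ι) (t : ℝ) :
    Integrable (fun ω => exp (t * ∑ i ∈ s, |W i ω|)) P := by
  have hint : ∀ i, Integrable (fun ω => exp (t * |W i ω|)) P := fun i =>
    integrable_exp_mul_abs (integrable_exp_mul_of_map_eq_gaussianReal (hWd i) t)
      (integrable_exp_mul_of_map_eq_gaussianReal (hWd i) (-t))
  simpa using (hW.comp (fun _ x => |x|) fun _ => measurable_abs).integrable_exp_mul_sum
    (fun i => (hWm i).abs) fun i _ => hint i

lemma measure_biInter_preimage_eq_pow {ι β : Type*} [MeasurableSpace β] {Y : ι → Ω → β}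
    (hY : iIndepFun Y P) {S : Set β} (hS : MeasurableSet S) {a : ENNReal} (s : Finset ι)
    (ha : ∀ i ∈ s, P (Y i ⁻¹' S) = a) : P (⋂ i ∈ s, Y i ⁻¹' S) = a ^ s.card := by
  rw [hY.measure_inter_preimage_eq_mul s (sets := fun _ => S) fun _ _ => hS, prod_congr rfl ha,
    prod_const]

variable {B W : ℕ → Ω → ℝ}

lemma measurable_renewalChain (hBm : ∀ i, Measurable (B i)) (hWm : ∀ i, Measurable (W i))
    (i : ℕ) : Measurable fun ω => renewalChain (B · ω) (W · ω) i := by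
  unfold renewalChain
  fun_prop

lemma integrable_exp_mul_sum_renewalChain [IsProbabilityMeasure P]
    (hBm : ∀ i, Measurable (B i)) (hWm : ∀ i, Measurable (W i))
    (hB : ∀ k, 1 ≤ k → ∀ᵐ ω ∂P, B k ω ∈ Set.Icc 0 1)
    (hW : iIndepFun (fun i => W (i + 1)) P) {μ : ℝ} {v : NNReal}
    (hWd : ∀ i, 1 ≤ i → P.map (W i) = gaussianReal μ v) (n : ℕ) (t : ℝ) :
    Integrable (fun ω => exp (t * ∑ i ∈ Icc 1 n, renewalChain (B · ω) (W · ω) i)) P := by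
  have hdom := integrable_exp_mul_sum_abs_of_map_eq_gaussianReal hW (fun i => hWm (i + 1))
    (fun i => hWd (i + 1) (Nat.le_add_left 1 i)) (range n) (|t| * n)
  have hreindex : ∀ ω, ∑ i ∈ range n, |W (i + 1) ω| = ∑ j ∈ Icc 1 n, |W j ω| := fun ω => by
    rw [range_eq_Ico, sum_Ico_add' (fun j => |W j ω|) 0 n 1, zero_add,
      Ico_add_one_right_eq_Icc]
  have hSm := Finset.measurable_sum (Icc 1 n) fun i _ => measurable_renewalChain hBm hWm i
  refine hdom.mono' (measurable_exp.comp (hSm.const_mul t)).aestronglyMeasurable ?_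
  filter_upwards [(Finset.eventually_all (Icc 1 n)).2 fun k hk => hB k (mem_Icc.1 hk).1]
    with ω hω
  rw [norm_of_nonneg (exp_pos _).le, hreindex, mul_assoc]
  refine exp_le_exp.2 ?_
  calc _ ≤ |t * ∑ i ∈ Icc 1 n, renewalChain (B · ω) (W · ω) i| := le_abs_self _
    _ = |t| * |∑ i ∈ Icc 1 n, renewalChain (B · ω) (W · ω) i| := abs_mul _ _
    _ ≤ _ := by gcongr; exact abs_sum_renewalChain_le _ hω

lemma pow_mul_exp_le_integral_exp_mul_sum_renewalChain [IsProbabilityMeasure P] {lam : ℝ}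
    (hlam : 0 ≤ lam) (hBm : ∀ i, Measurable (B i)) (hWm : ∀ i, Measurable (W i))
    (hB1 : ∀ ω, B 1 ω = 1) (hB0 : ∀ k, 2 ≤ k → P (B k ⁻¹' {0}) = ENNReal.ofReal lam)
    (hW1 : P.map (W 1) = gaussianReal 0 1)
    (hindep : iIndepFun (Sum.elim (fun i => B (i + 2)) (fun i => W (i + 1))) P)
    (n : ℕ) (t : ℝ)
    (hint : Integrable (fun ω => exp (t * ∑ i ∈ Icc 1 n, renewalChain (B · ω) (W · ω) i)) P) :
    lam ^ (n - 1) * exp (t ^ 2 * n ^ 2 / 2) ≤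
      ∫ ω, exp (t * ∑ i ∈ Icc 1 n, renewalChain (B · ω) (W · ω) i) ∂P := by
  set F := Sum.elim (fun i => B (i + 2)) (fun i => W (i + 1))
  have hFm : ∀ k, Measurable (F k) := by
    rintro (i | i)
    exacts [hBm (i + 2), hWm (i + 1)]
  -- no renewal among `B 2, …, B n`
  set A := ⋂ i ∈ range (n - 1), B (i + 2) ⁻¹' {0}
  have hPA : P.real A = lam ^ (n - 1) := by
    rw [measureReal_def, measure_biInter_preimage_eq_pow (Y := fun i => B (i + 2))
      (hindep.precomp Sum.inl_injective) (measurableSet_singleton 0) (range (n - 1))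
      fun i _ => hB0 (i + 2) (Nat.le_add_left 2 i),
      card_range, ENNReal.toReal_pow, ENNReal.toReal_ofReal hlam]
  have hEW : ∫ ω, exp (t * n * W 1 ω) ∂P = exp (t ^ 2 * n ^ 2 / 2) := by
    rw [← mgf, mgf_gaussianReal hW1]
    congr 1
    push_cast
    ring
  have hS : ∀ ω ∈ A, exp (t * ∑ i ∈ Icc 1 n, renewalChain (B · ω) (W · ω) i) =
      exp (t * n * W 1 ω) := by
    intro ω hω
    simp only [A, Set.mem_iInter, mem_range, Set.mem_preimage, Set.mem_singleton_iff] at hω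
    rw [sum_renewalChain_eq_of_forall_eq_zero _ (hB1 ω) fun k hk => ?_, mul_assoc]
    obtain ⟨hk2, hkn⟩ := mem_Icc.1 hk
    simpa [Nat.sub_add_cancel hk2] using hω (k - 2) (by omega)
  rw [← hPA, ← hEW]
  refine measureReal_mul_integral_le_integral_of_indep
    (m := ⨆ k ∈ Set.range Sum.inl, MeasurableSpace.comap (F k) inferInstance) (Y := W 1)
    (g := fun x => exp (t * n * x))
    (iSup₂_le fun k _ => (hFm k).comap_le) ?_ (hWm 1).aemeasurable ?_ (by fun_prop) hint
    (ae_of_all _ fun _ => (exp_pos _).le) hS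
  · exact indep_of_indep_of_le_right
      (indep_iSup_of_disjoint (fun k => (hFm k).comap_le) hindep
        (Set.disjoint_singleton_right.2 (by simp) : Disjoint _ {Sum.inr 0}))
      (le_iSup₂ (f := fun k (_ : k ∈ ({Sum.inr 0} : Set (ℕ ⊕ ℕ))) =>
        MeasurableSpace.comap (F k) inferInstance) (Sum.inr 0) rfl)
  · exact Finset.measurableSet_biInter _ fun i _ =>
      le_iSup₂ (f := fun k (_ : k ∈ Set.range Sum.inl) => MeasurableSpace.comap (F k) inferInstance)
        (Sum.inl i) (Set.mem_range_self i) _ ⟨{0}, measurableSet_singleton 0, rfl⟩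

end Probability

lemma exists_exp_lt_pow_mul_exp {lam : ℝ} (h0 : 0 < lam) (h1 : lam ≤ 1) (a : ℝ) :
    ∃ n : ℕ, 1 ≤ n ∧ exp (n * a / 2) < lam ^ (n - 1) * exp (n ^ 2 / 2) := by
  obtain ⟨n, hn⟩ := exists_nat_gt (max (a - 2 * log lam) 1)
  have hn1 : 1 ≤ n := by exact_mod_cast (le_max_right _ _).trans hn.le
  refine ⟨n, hn1, ?_⟩
  rw [← exp_log h0, ← exp_nat_mul, ← exp_add, exp_lt_exp, Nat.cast_sub hn1, Nat.cast_one]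
  have hpos : 0 < (n : ℝ) * (n - (a - 2 * log lam)) :=
    mul_pos (by positivity) (sub_pos.2 ((le_max_left _ _).trans_lt hn))
  nlinarith [log_nonpos h0.le h1]

open MeasureTheory ProbabilityTheory in
theorem stmt_15 {Ω : Type*} [MeasurableSpace Ω] (P : Measure Ω) [IsProbabilityMeasure P]
    (lam : ℝ) (hlam : lam ∈ Set.Ioo (0:ℝ) 1)
    (B W : ℕ → Ω → ℝ)
    (hBm : ∀ i, Measurable (B i)) (hWm : ∀ i, Measurable (W i))
    (hB1 : ∀ ω, B 1 ω = 1)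
    (hBd : ∀ i, 2 ≤ i → Measure.map (B i) P =
      ENNReal.ofReal lam • Measure.dirac (0 : ℝ) +
        ENNReal.ofReal (1 - lam) • Measure.dirac (1 : ℝ))
    (hWd : ∀ i, 1 ≤ i → Measure.map (W i) P = gaussianReal 0 1)
    (hindep : iIndepFun
      (Sum.elim (fun i => B (i + 2)) (fun i => W (i + 1))) P)
    (X : ℕ → Ω → ℝ)
    (hX : ∀ i ω, X i ω = ∑ j ∈ Finset.Icc 1 i,
      (∏ k ∈ Finset.Icc (j + 1) i, (1 - B k ω)) * (B j ω * W j ω)) :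
    (∀ n : ℕ, 1 ≤ n → ∀ t : ℝ,
      lam ^ (n - 1) * Real.exp (t ^ 2 * (n : ℝ) ^ 2 / 2) ≤
        ∫ ω, Real.exp (t * ∑ i ∈ Finset.Icc 1 n, X i ω) ∂P) ∧
    ¬ ∃ atil : ℝ, ∀ n : ℕ, 1 ≤ n → ∀ t : ℝ,
      ∫ ω, Real.exp (t * ∑ i ∈ Finset.Icc 1 n, X i ω) ∂P ≤
        Real.exp ((n : ℝ) * atil * t ^ 2 / 2) := by
  obtain ⟨hlam0, hlam1⟩ := hlam
  have hB01 : ∀ k, 1 ≤ k → ∀ᵐ ω ∂P, B k ω ∈ Set.Icc 0 1 := by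
    intro k hk
    rcases hk.eq_or_lt with rfl | hk2
    · exact ae_of_all _ fun ω => by simp [hB1 ω]
    · exact ae_mem_Icc_of_map_eq (hBm k) (hBd k hk2)
  have hlower : ∀ n : ℕ, 1 ≤ n → ∀ t : ℝ, lam ^ (n - 1) * exp (t ^ 2 * n ^ 2 / 2) ≤
      ∫ ω, exp (t * ∑ i ∈ Icc 1 n, X i ω) ∂P := by
    intro n _ t
    simp_rw [hX]
    exact pow_mul_exp_le_integral_exp_mul_sum_renewalChain hlam0.le hBm hWm hB1
      (fun k hk => measure_preimage_zero_of_map_eq (hBm k) (hBd k hk)) (hWd 1 le_rfl) hindep n t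
      (integrable_exp_mul_sum_renewalChain hBm hWm hB01 (hindep.precomp Sum.inr_injective) hWd
        n t)
  refine ⟨hlower, fun ⟨atil, hatil⟩ => ?_⟩
  obtain ⟨n, hn, hlt⟩ := exists_exp_lt_pow_mul_exp hlam0 hlam1.le atil
  have hle := (hlower n hn 1).trans (hatil n hn 1)
  simp only [one_pow, one_mul, mul_one] at hle
  exact hlt.not_ge hle
end
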